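/- arXiv:1711.07834 — 2 statements merged into one kernel-verified Lean document; each statement's English description precedes it below -/
import Mathlib

section
/- Let Ω ⊂ ℝⁿ (n ≥ 2) be a nonempty open set. Then there exists a countable system of nonempty open balls {E_l}_{l∈ℕ} contained in Ω such that: (i) the set of centers of the balls E_l is dense in Ω; (ii) sup_l (diam E_{l+1})/(diam E_l) < 1/2; (iii) whenever k, l ∈ ℕ satisfy ⌊l^{1/3}⌋ ≤ k < l, the balls E_k and E_l are disjoint. -/
open Metric Set

section Aux

variable {E : Type*} [NormedAddCommGroup E] [NormedSpace ℝ E]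

/-- A positive real below `a` and below finitely many positive values. -/
lemma exists_pos_le (a : ℝ) (ha : 0 < a) (F : Finset ℕ) (f : ℕ → ℝ)
    (hf : ∀ i ∈ F, 0 < f i) : ∃ b : ℝ, 0 < b ∧ b ≤ a ∧ ∀ i ∈ F, b ≤ f i := by
  classical
  set G : Finset ℝ := insert a (F.image f) with hG
  have hGne : G.Nonempty := ⟨a, Finset.mem_insert_self _ _⟩
  refine ⟨G.min' hGne, ?_, ?_, ?_⟩
  · rcases Finset.mem_insert.mp (Finset.min'_mem G hGne) with h | h
    · rw [h]; exact ha
    · obtain ⟨i, hi, hfi⟩ := Finset.mem_image.mp h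
      rw [← hfi]; exact hf i hi
  · exact Finset.min'_le _ _ (Finset.mem_insert_self _ _)
  · intro i hi
    exact Finset.min'_le _ _ (Finset.mem_insert_of_mem (Finset.mem_image_of_mem f hi))

/-- Line-avoidance: from `x` one can move a distance at most `ρ` and avoid finitely
many balls whose radii sum is small. -/
lemma avoid (e : E) (he : ‖e‖ = 1) (x : E) (ρ : ℝ) (hρ : 0 < ρ)
    (F : Finset ℕ) (c : ℕ → E) (r : ℕ → ℝ) (hr : ∀ k ∈ F, 0 ≤ r k)
    (hsum : ∑ k ∈ F, 4 * r k < ρ) :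
    ∃ y : E, dist y x ≤ ρ ∧ ∀ k ∈ F, r k < dist y (c k) := by
  set S : ℕ → Set ℝ := fun k => {t : ℝ | dist (x + t • e) (c k) ≤ r k} with hS
  have hdist : ∀ t s : ℝ, dist (x + t • e) (x + s • e) = |t - s| := by
    intro t s
    rw [dist_eq_norm]
    have : x + t • e - (x + s • e) = (t - s) • e := by
      rw [sub_smul]; abel
    rw [this, norm_smul, he, Real.norm_eq_abs, mul_one]
  have hvol : ∀ k ∈ F, MeasureTheory.volume (S k) ≤ ENNReal.ofReal (4 * r k) := by
    intro k hk
    rcases (S k).eq_empty_or_nonempty with h | ⟨t0, ht0⟩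
    · rw [h]; simp
    · have hsub : S k ⊆ Set.Icc (t0 - 2 * r k) (t0 + 2 * r k) := by
        intro t ht
        have h1 : dist (x + t • e) (x + t0 • e) ≤ 2 * r k := by
          calc dist (x + t • e) (x + t0 • e)
              ≤ dist (x + t • e) (c k) + dist (c k) (x + t0 • e) := dist_triangle _ _ _
            _ ≤ r k + r k := by
                have := ht; have := ht0
                rw [dist_comm (c k)]
                exact add_le_add ht ht0
            _ = 2 * r k := by ring
        rw [hdist] at h1
        rcases abs_sub_le_iff.mp h1 with ⟨h2, h3⟩
        constructor <;> linarith
      calc MeasureTheory.volume (S k) ≤ MeasureTheory.volume (Set.Icc (t0 - 2 * r k) (t0 + 2 * r k)) :=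
            MeasureTheory.measure_mono hsub
        _ = ENNReal.ofReal (4 * r k) := by rw [Real.volume_Icc]; ring_nf
  have hvolU : MeasureTheory.volume (⋃ k ∈ F, S k) < ENNReal.ofReal ρ := by
    calc MeasureTheory.volume (⋃ k ∈ F, S k) ≤ ∑ k ∈ F, MeasureTheory.volume (S k) :=
          MeasureTheory.measure_biUnion_finset_le F S
      _ ≤ ∑ k ∈ F, ENNReal.ofReal (4 * r k) := Finset.sum_le_sum hvol
      _ = ENNReal.ofReal (∑ k ∈ F, 4 * r k) := by
          rw [ENNReal.ofReal_sum_of_nonneg (fun i hi => by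
            have := hr i hi; linarith)]
      _ < ENNReal.ofReal ρ := (ENNReal.ofReal_lt_ofReal_iff hρ).mpr hsum
  have hnot : ¬ (Set.Icc (0:ℝ) ρ ⊆ ⋃ k ∈ F, S k) := by
    intro hsub
    have h1 : MeasureTheory.volume (Set.Icc (0:ℝ) ρ) ≤ MeasureTheory.volume (⋃ k ∈ F, S k) :=
      MeasureTheory.measure_mono hsub
    rw [Real.volume_Icc, sub_zero] at h1
    exact absurd (lt_of_le_of_lt h1 hvolU) (lt_irrefl _)
  obtain ⟨t, htI, htU⟩ := Set.not_subset.mp hnot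
  refine ⟨x + t • e, ?_, ?_⟩
  · have : dist (x + t • e) x = |t| := by
      have := hdist t 0
      simpa using this
    rw [this, abs_of_nonneg htI.1]
    exact htI.2
  · intro k hk
    by_contra hc
    push_neg at hc
    exact htU (Set.mem_biUnion hk (by exact hc : t ∈ S k))

/-- Lower bound on the diameter of a ball in a space with a unit vector. -/
lemma two_mul_le_diam (e : E) (he : ‖e‖ = 1) (c : E) {r : ℝ} (hr : 0 ≤ r) :
    2 * r ≤ Metric.diam (Metric.ball c r) := by
  rcases eq_or_lt_of_le hr with h | h
  · rw [← h]; simpa using Metric.diam_nonneg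
  have hd0 : 0 ≤ Metric.diam (Metric.ball c r) := Metric.diam_nonneg
  by_contra hc
  push_neg at hc
  set t : ℝ := (Metric.diam (Metric.ball c r) + 2 * r) / 4 with htdef
  have ht1 : t < r := by rw [htdef]; linarith
  have ht0 : 0 ≤ t := by rw [htdef]; linarith
  have hnorm : ∀ s : ℝ, ‖s • e‖ = |s| := by
    intro s; rw [norm_smul, he, Real.norm_eq_abs, mul_one]
  have hmem1 : c + t • e ∈ Metric.ball c r := by
    rw [Metric.mem_ball, dist_eq_norm]
    have : c + t • e - c = t • e := by abel
    rw [this, hnorm, abs_of_nonneg ht0]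
    exact ht1
  have hmem2 : c - t • e ∈ Metric.ball c r := by
    rw [Metric.mem_ball, dist_eq_norm]
    have : c - t • e - c = (-t) • e := by rw [neg_smul]; abel
    rw [this, hnorm, abs_neg, abs_of_nonneg ht0]
    exact ht1
  have hdd := Metric.dist_le_diam_of_mem Metric.isBounded_ball hmem1 hmem2
  have : dist (c + t • e) (c - t • e) = 2 * t := by
    rw [dist_eq_norm]
    have : c + t • e - (c - t • e) = (2 * t) • e := by
      rw [two_mul, add_smul]; abel
    rw [this, hnorm, abs_of_nonneg (by linarith)]
  rw [this] at hdd
  rw [htdef] at hdd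
  linarith

/-- The invariant at step `l` for value `p`, relative to earlier values given by `f`. -/
def GoodAt (Ω : Set E) (x : ℕ → E) (ρ : ℕ → ℝ) (l : ℕ) (f : ℕ → E × ℝ) (p : E × ℝ) : Prop :=
  0 < p.2 ∧ Metric.ball p.1 p.2 ⊆ Ω ∧ dist p.1 (x l) ≤ ρ l ∧
  (∀ j : ℕ, l < j → j < (l + 1) ^ 3 → 100 * ((l : ℝ) + 1) ^ 3 * p.2 ≤ ρ j) ∧
  (∀ m : ℕ, l = m + 1 → 4 * p.2 ≤ (f m).2) ∧
  (∀ k : ℕ, l < (k + 1) ^ 3 → k < l → p.2 + (f k).2 ≤ dist p.1 (f k).1)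

lemma goodAt_congr {Ω : Set E} {x : ℕ → E} {ρ : ℕ → ℝ} {l : ℕ} {f f' : ℕ → E × ℝ} {p : E × ℝ}
    (h : ∀ i < l, f i = f' i) (hg : GoodAt Ω x ρ l f p) : GoodAt Ω x ρ l f' p := by
  obtain ⟨h1, h2, h3, h4, h5, h6⟩ := hg
  refine ⟨h1, h2, h3, h4, ?_, ?_⟩
  · intro m hm
    rw [← h m (by omega)]
    exact h5 m hm
  · intro k hk1 hk2
    rw [← h k hk2]
    exact h6 k hk1 hk2

end Aux

/-- Build a sequence by strong recursion with choice. -/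
noncomputable def buildSeq {α : Type*} (T : ℕ → (ℕ → α) → α → Prop) (d : α)
    (H : ∀ l f, ∃ a, T l f a) (l : ℕ) : α :=
  Classical.choose (H l (fun k => if h : k < l then buildSeq T d H k else d))
termination_by l

lemma buildSeq_spec {α : Type*} (T : ℕ → (ℕ → α) → α → Prop) (d : α)
    (H : ∀ l f, ∃ a, T l f a) (l : ℕ) :
    T l (fun k => if h : k < l then buildSeq T d H k else d) (buildSeq T d H l) := by
  rw [buildSeq]
  exact Classical.choose_spec _

lemma stepEx {E : Type*} [NormedAddCommGroup E] [NormedSpace ℝ E]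
    (e : E) (he : ‖e‖ = 1) (Ω : Set E) (hΩ : IsOpen Ω) (x : ℕ → E) (ρ : ℕ → ℝ)
    (hρ : ∀ l, 0 < ρ l) (hx : ∀ l, Metric.ball (x l) (ρ l) ⊆ Ω)
    (l : ℕ) (f : ℕ → E × ℝ) (H : ∀ k < l, GoodAt Ω x ρ k f (f k)) :
    ∃ p, GoodAt Ω x ρ l f p := by
  classical
  set K : Finset ℕ := (Finset.range l).filter (fun k => l < (k + 1) ^ 3) with hK
  have hKmem : ∀ k ∈ K, k < l ∧ l < (k + 1) ^ 3 := by
    intro k hk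
    rw [hK, Finset.mem_filter, Finset.mem_range] at hk
    exact ⟨hk.1, hk.2⟩
  have hKpos : ∀ k ∈ K, 0 < (f k).2 := by
    intro k hk
    exact (H k (hKmem k hk).1).1
  -- each relevant radius is small
  have hsmall : ∀ k ∈ K, 100 * ((l : ℝ) + 1) * (f k).2 ≤ ρ l := by
    intro k hk
    obtain ⟨hkl, hlk⟩ := hKmem k hk
    have h4 := (H k hkl).2.2.2.1 l hkl hlk
    have hcast : ((l : ℝ) + 1) ≤ ((k : ℝ) + 1) ^ 3 := by
      have : (l + 1 : ℕ) ≤ (k + 1) ^ 3 := hlk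
      exact_mod_cast this
    nlinarith [hKpos k hk, hKpos k hk]
  -- sum bound
  have hsum : ∑ k ∈ K, 4 * (f k).2 < ρ l / 2 := by
    have hcard : (K.card : ℝ) ≤ (l : ℝ) := by
      have : K.card ≤ l := le_trans (Finset.card_filter_le _ _) (Finset.card_range l).le
      exact_mod_cast this
    have hterm : ∀ k ∈ K, 100 * ((l : ℝ) + 1) * (4 * (f k).2) ≤ 4 * ρ l := by
      intro k hk
      have := hsmall k hk
      nlinarith
    have h1 : ∑ k ∈ K, 100 * ((l : ℝ) + 1) * (4 * (f k).2) ≤ ∑ _k ∈ K, 4 * ρ l :=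
      Finset.sum_le_sum hterm
    rw [Finset.sum_const, ← Finset.mul_sum, nsmul_eq_mul] at h1
    have h2 : (K.card : ℝ) * (4 * ρ l) ≤ (l : ℝ) * (4 * ρ l) :=
      mul_le_mul_of_nonneg_right hcard (by linarith [hρ l])
    have hL : (0 : ℝ) ≤ (l : ℝ) := Nat.cast_nonneg l
    have hρl := hρ l
    have h3 : 100 * ((l : ℝ) + 1) * ∑ k ∈ K, 4 * (f k).2 ≤ 4 * (l : ℝ) * ρ l := by
      nlinarith
    by_contra hS
    push_neg at hS
    have h5 : 100 * ((l : ℝ) + 1) * (ρ l / 2) ≤ 100 * ((l : ℝ) + 1) * ∑ k ∈ K, 4 * (f k).2 :=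
      mul_le_mul_of_nonneg_left hS (by positivity)
    nlinarith
  -- avoid the relevant balls
  obtain ⟨y, hyd, hyavoid⟩ := avoid e he (x l) (ρ l / 2) (by linarith [hρ l]) K
    (fun k => (f k).1) (fun k => (f k).2) (fun k hk => (hKpos k hk).le) hsum
  have hyΩ : y ∈ Ω := hx l (by rw [Metric.mem_ball]; linarith [hρ l])
  obtain ⟨δ, hδpos, hδ⟩ := Metric.isOpen_iff.mp hΩ y hyΩ
  -- base bound
  set b0 : ℝ := if l = 0 then δ else min δ ((f (l - 1)).2 / 4) with hb0def
  have hb0pos : 0 < b0 := by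
    rw [hb0def]
    split
    · exact hδpos
    · rename_i hl0
      have hprev : 0 < (f (l - 1)).2 := (H (l - 1) (by omega)).1
      exact lt_min hδpos (by linarith)
  have hb0δ : b0 ≤ δ := by
    rw [hb0def]; split
    · exact le_rfl
    · exact min_le_left _ _
  set J : Finset ℕ := Finset.Ioo l ((l + 1) ^ 3) with hJ
  obtain ⟨b1, hb1pos, hb1b0, hb1J⟩ := exists_pos_le b0 hb0pos J
    (fun j => ρ j / (100 * ((l : ℝ) + 1) ^ 3)) (fun j _ => div_pos (hρ j) (by positivity))
  obtain ⟨rl, hrlpos, hrlb1, hrlK⟩ := exists_pos_le b1 hb1pos K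
    (fun k => dist y (f k).1 - (f k).2)
    (fun k hk => sub_pos.mpr (hyavoid k hk))
  refine ⟨(y, rl), hrlpos, ?_, ?_, ?_, ?_, ?_⟩
  · exact (Metric.ball_subset_ball (by linarith)).trans hδ
  · simp only
    linarith [hρ l]
  · intro j hj1 hj2
    have hjJ : j ∈ J := by rw [hJ, Finset.mem_Ioo]; exact ⟨hj1, hj2⟩
    have := hb1J j hjJ
    simp only at this ⊢
    have hD : (0 : ℝ) < 100 * ((l : ℝ) + 1) ^ 3 := by positivity
    rw [le_div_iff₀ hD] at this
    nlinarith
  · intro m hm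
    have hl0 : l ≠ 0 := by omega
    have : b0 ≤ (f (l - 1)).2 / 4 := by
      rw [hb0def, if_neg hl0]; exact min_le_right _ _
    have hm' : l - 1 = m := by omega
    rw [hm'] at this
    simp only
    linarith
  · intro k hk1 hk2
    have hkK : k ∈ K := by
      rw [hK, Finset.mem_filter, Finset.mem_range]; exact ⟨hk2, hk1⟩
    have := hrlK k hkK
    simp only at this ⊢
    linarith

lemma exists_good_seq {E : Type*} [NormedAddCommGroup E] [NormedSpace ℝ E]
    (e : E) (he : ‖e‖ = 1) (Ω : Set E) (hΩ : IsOpen Ω) (x : ℕ → E) (ρ : ℕ → ℝ)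
    (hρ : ∀ l, 0 < ρ l) (hx : ∀ l, Metric.ball (x l) (ρ l) ⊆ Ω) :
    ∃ g : ℕ → E × ℝ, ∀ l, GoodAt Ω x ρ l g (g l) := by
  classical
  set T : ℕ → (ℕ → E × ℝ) → (E × ℝ) → Prop :=
    fun l f p => (∀ k < l, GoodAt Ω x ρ k f (f k)) → GoodAt Ω x ρ l f p with hT
  have H : ∀ l f, ∃ a, T l f a := by
    intro l f
    by_cases h : ∀ k < l, GoodAt Ω x ρ k f (f k)
    · obtain ⟨p, hp⟩ := stepEx e he Ω hΩ x ρ hρ hx l f h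
      exact ⟨p, fun _ => hp⟩
    · exact ⟨(x 0, 1), fun hh => absurd hh h⟩
  set g : ℕ → E × ℝ := buildSeq T (x 0, 1) H with hg
  refine ⟨g, ?_⟩
  intro l
  induction l using Nat.strong_induction_on with
  | _ l IH =>
    set f : ℕ → E × ℝ := fun k => if h : k < l then buildSeq T (x 0, 1) H k else (x 0, 1)
      with hfdef
    have hagree : ∀ k, k < l → f k = g k := by
      intro k hk
      rw [hfdef]
      simp [hk, hg]
    have hpre : ∀ k < l, GoodAt Ω x ρ k f (f k) := by
      intro k hk
      rw [hagree k hk]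
      exact goodAt_congr (fun i hi => (hagree i (hi.trans hk)).symm) (IH k hk)
    have hspec := buildSeq_spec T (x 0, 1) H l
    have : GoodAt Ω x ρ l f (g l) := hspec hpre
    exact goodAt_congr hagree this

lemma floor_bridge {k l : ℕ} (h : ⌊((l : ℝ)) ^ ((1 : ℝ) / 3)⌋₊ ≤ k) : l < (k + 1) ^ 3 := by
  by_contra hc
  push_neg at hc
  have hle : (((k + 1) ^ 3 : ℕ) : ℝ) ≤ (l : ℝ) := by exact_mod_cast hc
  have h1 : ((k : ℝ) + 1) ≤ (l : ℝ) ^ ((1 : ℝ) / 3) := by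
    have hb : ((k : ℝ) + 1) = ((((k + 1) ^ 3 : ℕ) : ℝ)) ^ ((1 : ℝ) / 3) := by
      push_cast
      rw [← Real.rpow_natCast ((k : ℝ) + 1) 3, ← Real.rpow_mul (by positivity)]
      norm_num
    rw [hb]
    exact Real.rpow_le_rpow (by positivity) hle (by norm_num)
  have h2 : k + 1 ≤ ⌊((l : ℝ)) ^ ((1 : ℝ) / 3)⌋₊ := Nat.le_floor (by exact_mod_cast h1)
  omega

/-- Lemma 2 of the paper: in any nonempty open set `Ω ⊆ ℝⁿ` (`n ≥ 2`) there is a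
countable system of nonempty open balls contained in `Ω` whose centers are dense in `Ω`,
whose diameters decay with ratio uniformly below `1/2`, and such that the balls `E_k`
and `E_l` are disjoint whenever `⌊l^(1/3)⌋ ≤ k < l`. -/
theorem stmt0 (n : ℕ) (hn : 2 ≤ n) (Ω : Set (EuclideanSpace ℝ (Fin n)))
    (hΩ : IsOpen Ω) (hne : Ω.Nonempty) :
    ∃ (c : ℕ → EuclideanSpace ℝ (Fin n)) (r : ℕ → ℝ),
      (∀ l, 0 < r l) ∧
      (∀ l, ball (c l) (r l) ⊆ Ω) ∧
      (Ω ⊆ closure (Set.range c)) ∧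
      (∃ s : ℝ, s < 1 / 2 ∧ ∀ l,
        diam (ball (c (l + 1)) (r (l + 1))) ≤ s * diam (ball (c l) (r l))) ∧
      (∀ k l : ℕ, ⌊((l : ℝ)) ^ ((1 : ℝ) / 3)⌋₊ ≤ k → k < l →
        Disjoint (ball (c k) (r k)) (ball (c l) (r l))) := by
  classical
  have hn0 : 0 < n := by omega
  set e : EuclideanSpace ℝ (Fin n) := EuclideanSpace.single ⟨0, hn0⟩ (1 : ℝ) with he'
  have he : ‖e‖ = 1 := by
    rw [he', EuclideanSpace.norm_single]
    norm_num
  haveI : Nonempty Ω := hne.to_subtype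
  obtain ⟨u, hu⟩ := TopologicalSpace.exists_dense_seq Ω
  set x : ℕ → EuclideanSpace ℝ (Fin n) := fun l => (u (Nat.unpair l).1 : EuclideanSpace ℝ (Fin n)) with hxdef
  have hxΩ : ∀ l, x l ∈ Ω := fun l => (u (Nat.unpair l).1).2
  have hρex : ∀ l : ℕ, ∃ d : ℝ, 0 < d ∧ d ≤ 1 / ((l : ℝ) + 1) ∧ Metric.ball (x l) d ⊆ Ω := by
    intro l
    obtain ⟨δ, hδpos, hδ⟩ := Metric.isOpen_iff.mp hΩ (x l) (hxΩ l)
    exact ⟨min δ (1 / ((l : ℝ) + 1)), lt_min hδpos (by positivity), min_le_right _ _,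
      (Metric.ball_subset_ball (min_le_left _ _)).trans hδ⟩
  choose ρ hρpos hρle hρball using hρex
  obtain ⟨g, hg⟩ := exists_good_seq e he Ω hΩ x ρ hρpos hρball
  set c : ℕ → EuclideanSpace ℝ (Fin n) := fun l => (g l).1 with hcdef
  set r : ℕ → ℝ := fun l => (g l).2 with hrdef
  have hrpos : ∀ l, 0 < r l := fun l => (hg l).1
  have hball : ∀ l, ball (c l) (r l) ⊆ Ω := fun l => (hg l).2.1
  have hdist : ∀ l, dist (c l) (x l) ≤ ρ l := fun l => (hg l).2.2.1
  refine ⟨c, r, hrpos, hball, ?_, ?_, ?_⟩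
  · -- density
    intro y hy
    rw [Metric.mem_closure_iff]
    intro ε hε
    obtain ⟨i, hi⟩ := Metric.denseRange_iff.mp hu ⟨y, hy⟩ (ε / 2) (by linarith)
    obtain ⟨N, hN⟩ := exists_nat_one_div_lt (show (0 : ℝ) < ε / 2 by linarith)
    set l := Nat.pair i N with hl
    refine ⟨c l, Set.mem_range_self l, ?_⟩
    have h1 : dist (c l) (x l) ≤ ρ l := hdist l
    have h2 : ρ l ≤ 1 / ((l : ℝ) + 1) := hρle l
    have hNl : (N : ℝ) ≤ (l : ℝ) := by exact_mod_cast Nat.right_le_pair i N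
    have h3 : 1 / ((l : ℝ) + 1) ≤ 1 / ((N : ℝ) + 1) :=
      one_div_le_one_div_of_le (by positivity) (by linarith)
    have hxl : x l = (u i : EuclideanSpace ℝ (Fin n)) := by
      rw [hxdef]
      simp [hl, Nat.unpair_pair]
    have h4 : dist y (x l) < ε / 2 := by
      rw [hxl]
      rw [Subtype.dist_eq] at hi
      exact hi
    calc dist y (c l) ≤ dist y (x l) + dist (x l) (c l) := dist_triangle _ _ _
      _ = dist y (x l) + dist (c l) (x l) := by rw [dist_comm (x l)]
      _ < ε / 2 + ε / 2 := by
          have : dist (c l) (x l) < ε / 2 := by linarith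
          linarith
      _ = ε := by ring
  · -- ratio
    refine ⟨1 / 4, by norm_num, fun l => ?_⟩
    have h5 : 4 * r (l + 1) ≤ r l := (hg (l + 1)).2.2.2.2.1 l rfl
    calc diam (ball (c (l + 1)) (r (l + 1))) ≤ 2 * r (l + 1) :=
          Metric.diam_ball (hrpos (l + 1)).le
      _ ≤ 1 / 4 * (2 * r l) := by linarith
      _ ≤ 1 / 4 * diam (ball (c l) (r l)) := by
          have := two_mul_le_diam e he (c l) (hrpos l).le
          linarith
  · -- disjointness
    intro k l hfl hkl
    have hl3 : l < (k + 1) ^ 3 := floor_bridge hfl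
    have h6 : r l + r k ≤ dist (c l) (c k) := (hg l).2.2.2.2.2 k hl3 hkl
    exact ball_disjoint_ball (by rw [dist_comm (c k) (c l)]; linarith)
end

section
/- Fix k ∈ ℕ, a point x^k ∈ ℝⁿ (n ≥ 2) and radius r_k > 0, and define on ℝⁿ the vector field u^k with components u^k_1(x) = (k/r_k) χ_{B(x^k,r_k)}(x) (x_2 − x^k_2)(r_k/2 + |x−x^k|²/(2r_k) − |x−x^k|), u^k_2(x) = −(k/r_k) χ_{B(x^k,r_k)}(x) (x_1 − x^k_1)(r_k/2 + |x−x^k|²/(2r_k) − |x−x^k|), and u^k_m = 0 for 3 ≤ m ≤ n. Then u^k is continuous on ℝⁿ and div u^k = 0 in the sense of distributions. -/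
open Metric Set MeasureTheory


lemma aux_int {n : ℕ} {φ : EuclideanSpace ℝ (Fin n) → ℝ}
    (hφ : ContDiff ℝ (⊤ : ℕ∞) φ) (hφc : HasCompactSupport φ)
    {h : EuclideanSpace ℝ (Fin n) → ℝ} (hh : Continuous h) (v : EuclideanSpace ℝ (Fin n)) :
    Integrable (fun x => h x * fderiv ℝ φ x v) :=
  Continuous.integrable_of_hasCompactSupport
    (hh.mul (((hφ.fderiv_right (m := 1) (by exact (WithTop.coe_le_coe.mpr (le_top : (1 + 1 : ℕ∞) ≤ ⊤)))).continuous).clm_apply continuous_const))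
    ((hφc.fderiv_apply ℝ v).mul_left)

lemma aux_parts {n : ℕ} {w φ : EuclideanSpace ℝ (Fin n) → ℝ}
    (hw : ContDiff ℝ 1 w) (hφ : ContDiff ℝ (⊤ : ℕ∞) φ) (hφc : HasCompactSupport φ)
    (v v' : EuclideanSpace ℝ (Fin n)) :
    ∫ x, fderiv ℝ w x v * fderiv ℝ φ x v' = ∫ x, fderiv ℝ w x v' * fderiv ℝ φ x v := by
  have hwd : Differentiable ℝ w := hw.differentiable one_ne_zero
  have hφ' : ContDiff ℝ 1 (fderiv ℝ φ) := hφ.fderiv_right (m := 1) (by exact (WithTop.coe_le_coe.mpr (le_top : (1 + 1 : ℕ∞) ≤ ⊤)))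
  have hφ'' : ContDiff ℝ 1 (fderiv ℝ (fderiv ℝ φ)) := by
    have : ContDiff ℝ (⊤ : ℕ∞) (fderiv ℝ φ) := hφ.fderiv_right (m := (⊤ : ℕ∞)) (by simp)
    exact this.fderiv_right (m := 1) (by exact (WithTop.coe_le_coe.mpr (le_top : (1 + 1 : ℕ∞) ≤ ⊤)))
  have hsecond : ∀ (p q : EuclideanSpace ℝ (Fin n)) x,
      fderiv ℝ (fun y => fderiv ℝ φ y q) x p = fderiv ℝ (fderiv ℝ φ) x p q := by
    intro p q x
    rw [fderiv_clm_apply (hφ'.differentiable one_ne_zero x) (differentiableAt_const q)]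
    simp
  have ibp : ∀ (p q : EuclideanSpace ℝ (Fin n)),
      ∫ x, fderiv ℝ w x p * fderiv ℝ φ x q = - ∫ x, w x * fderiv ℝ (fderiv ℝ φ) x p q := by
    intro p q
    have h1 : Integrable (fun x => fderiv ℝ w x p * fderiv ℝ φ x q) :=
      aux_int hφ hφc ((contDiff_one_iff_fderiv.mp hw).2.clm_apply continuous_const) q
    have h2 : Integrable (fun x => w x * fderiv ℝ (fun y => fderiv ℝ φ y q) x p) := by
      simp only [hsecond p q]
      apply Continuous.integrable_of_hasCompactSupport
      · exact hw.continuous.mul ((hφ''.continuous.clm_apply continuous_const).clm_apply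
          continuous_const)
      · exact (((hφc.fderiv ℝ).fderiv ℝ).comp_left
          (g := fun L : _ →L[ℝ] _ →L[ℝ] ℝ => L p q) rfl).mul_left
    have h3 : Integrable (fun x => w x * fderiv ℝ φ x q) :=
      aux_int hφ hφc hw.continuous q
    have := integral_mul_fderiv_eq_neg_fderiv_mul_of_integrable h1 h2 h3 (fun x _ => hwd x)
      (fun x _ => (hφ'.clm_apply contDiff_const).differentiable one_ne_zero x)
    simp only [hsecond p q] at this
    linarith
  rw [ibp v v', ibp v' v]
  congr 1
  apply integral_congr_ae
  filter_upwards with x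
  congr 1
  exact second_derivative_symmetric (fun y => (hφ.differentiable (by simp) y).hasFDerivAt)
    ((hφ'.differentiable one_ne_zero x).hasFDerivAt) v v'



lemma aux_w {n : ℕ} (a : EuclideanSpace ℝ (Fin n)) {R : ℝ} (hR : 0 < R) (k : ℝ) :
    ∃ w : EuclideanSpace ℝ (Fin n) → ℝ, ContDiff ℝ 1 w ∧
      ∀ x i, fderiv ℝ w x (EuclideanSpace.single i 1)
        = k / (2 * R ^ 2) * (min ‖x - a‖ R - R) ^ 2 * (x i - a i) := by
  set g : ℝ → ℝ := fun s => k / (4 * R ^ 2) * (min (Real.sqrt s) R - R) ^ 2 with hgdef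
  have hgc : Continuous g :=
    continuous_const.mul (((Real.continuous_sqrt.min continuous_const).sub continuous_const).pow 2)
  set H : ℝ → ℝ := fun t => ∫ s in (0:ℝ)..t, g s with hHdef
  have hH : ∀ t, HasDerivAt H (g t) t := fun t =>
    intervalIntegral.integral_hasDerivAt_right (hgc.intervalIntegrable _ _)
      hgc.stronglyMeasurable.stronglyMeasurableAtFilter hgc.continuousAt
  have hq : ∀ x : EuclideanSpace ℝ (Fin n),
      HasFDerivAt (fun y => ‖y - a‖ ^ 2) (2 • (innerSL ℝ (x - a))) x := by
    intro x
    have := ((hasFDerivAt_id x).sub_const a).norm_sq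
    simpa using this
  have hw : ∀ x, HasFDerivAt (fun x => H (‖x - a‖ ^ 2))
      (g (‖x - a‖ ^ 2) • (2 • (innerSL ℝ (x - a)))) x :=
    fun x => (hH _).comp_hasFDerivAt x (hq x)
  have hfd : ∀ x, fderiv ℝ (fun x => H (‖x - a‖ ^ 2)) x
      = g (‖x - a‖ ^ 2) • (2 • (innerSL ℝ (x - a))) := fun x => (hw x).fderiv
  refine ⟨fun x => H (‖x - a‖ ^ 2), ?_, ?_⟩
  · rw [contDiff_one_iff_fderiv]
    refine ⟨fun x => (hw x).differentiableAt, ?_⟩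
    rw [funext hfd]
    exact (hgc.comp (((continuous_id.sub continuous_const).norm).pow 2)).smul
      ((((innerSL ℝ).continuous.comp (continuous_id.sub continuous_const))).const_smul 2)
  · intro x i
    rw [hfd]
    have h1 : (g (‖x - a‖ ^ 2) • (2 • (innerSL ℝ (x - a)))) (EuclideanSpace.single i 1)
        = g (‖x - a‖ ^ 2) * (2 * (x i - a i)) := by
      simp [EuclideanSpace.inner_single_right, real_inner_comm]
    rw [h1, hgdef]
    simp only [Real.sqrt_sq (norm_nonneg (x - a))]
    field_simp
    ring



/-- The basic building block `u^k` of the counterexample: with `B_k = B(a, R)` and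
components `u¹ = (k/R) χ_{B_k} (x₂ − a₂) (R/2 + |x−a|²/(2R) − |x−a|)`,
`u² = −(k/R) χ_{B_k} (x₁ − a₁) (R/2 + |x−a|²/(2R) − |x−a|)`, `uᵐ = 0` for `m ≥ 3`,
the field `u^k` is continuous on `ℝⁿ` and divergence free in the sense of distributions. -/
theorem stmt3 (n : ℕ) (hn : 2 ≤ n) (a : EuclideanSpace ℝ (Fin n)) (R : ℝ) (hR : 0 < R)
    (k : ℕ) (u : EuclideanSpace ℝ (Fin n) → EuclideanSpace ℝ (Fin n))
    (hu : ∀ x i, u x i =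
      if i = (⟨0, by omega⟩ : Fin n) then
        ((k : ℝ) / R) * (Set.indicator (ball a R) (fun _ => (1 : ℝ)) x) *
          (x ⟨1, by omega⟩ - a ⟨1, by omega⟩) * (R / 2 + ‖x - a‖ ^ 2 / (2 * R) - ‖x - a‖)
      else if i = (⟨1, by omega⟩ : Fin n) then
        -((k : ℝ) / R) * (Set.indicator (ball a R) (fun _ => (1 : ℝ)) x) *
          (x ⟨0, by omega⟩ - a ⟨0, by omega⟩) * (R / 2 + ‖x - a‖ ^ 2 / (2 * R) - ‖x - a‖)
      else 0) :
    Continuous u ∧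
    ∀ φ : EuclideanSpace ℝ (Fin n) → ℝ, ContDiff ℝ (⊤ : ℕ∞) φ → HasCompactSupport φ →
      ∫ x, ∑ i, u x i * fderiv ℝ φ x (EuclideanSpace.single i 1) = 0 := by
  obtain ⟨w, hw1, hw2⟩ := aux_w a hR (k : ℝ)
  have h01 : (⟨0, by omega⟩ : Fin n) ≠ ⟨1, by omega⟩ := by simp [Fin.ext_iff]
  have h10 : (⟨1, by omega⟩ : Fin n) ≠ ⟨0, by omega⟩ := by simp [Fin.ext_iff]
  -- the key scalar identity
  have key : ∀ x : EuclideanSpace ℝ (Fin n),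
      ((k : ℝ) / R) * (Set.indicator (ball a R) (fun _ => (1 : ℝ)) x) *
        (R / 2 + ‖x - a‖ ^ 2 / (2 * R) - ‖x - a‖)
      = (k : ℝ) / (2 * R ^ 2) * (min ‖x - a‖ R - R) ^ 2 := by
    intro x
    by_cases hx : x ∈ ball a R
    · have hr : ‖x - a‖ < R := by rwa [mem_ball_iff_norm] at hx
      rw [Set.indicator_of_mem hx, min_eq_left hr.le]
      field_simp
      ring
    · have hr : R ≤ ‖x - a‖ := by
        rw [mem_ball_iff_norm] at hx; linarith [not_lt.mp hx]
      rw [Set.indicator_of_notMem hx, min_eq_right hr]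
      simp
  have hu0 : ∀ x, u x ⟨0, by omega⟩
      = fderiv ℝ w x (EuclideanSpace.single ⟨1, by omega⟩ 1) := by
    intro x
    rw [hu x ⟨0, by omega⟩, if_pos rfl, hw2]
    linear_combination (x ⟨1, by omega⟩ - a ⟨1, by omega⟩) * key x
  have hu1 : ∀ x, u x ⟨1, by omega⟩
      = -fderiv ℝ w x (EuclideanSpace.single ⟨0, by omega⟩ 1) := by
    intro x
    rw [hu x ⟨1, by omega⟩, if_neg h10, if_pos rfl, hw2]
    linear_combination (-(x ⟨0, by omega⟩ - a ⟨0, by omega⟩)) * key x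
  have hrest : ∀ x (i : Fin n), i ≠ ⟨0, by omega⟩ → i ≠ ⟨1, by omega⟩ → u x i = 0 := by
    intro x i h h'
    rw [hu x i, if_neg h, if_neg h']
  have hwc : Continuous (fderiv ℝ w) := (contDiff_one_iff_fderiv.mp hw1).2
  constructor
  · -- continuity
    have hc : ∀ i, Continuous fun x => u x i := by
      intro i
      by_cases h : i = (⟨0, by omega⟩ : Fin n)
      · subst h
        exact ((hwc.clm_apply continuous_const).congr fun x => (hu0 x).symm)
      · by_cases h' : i = (⟨1, by omega⟩ : Fin n)
        · subst h'
          exact (((hwc.clm_apply continuous_const).neg).congr fun x => (hu1 x).symm)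
        · exact continuous_const.congr fun x => (hrest x i h h').symm
    exact (PiLp.continuous_toLp 2 _).comp (continuous_pi hc)
  · intro φ hφ hφc
    have hsum : ∀ x, ∑ i, u x i * fderiv ℝ φ x (EuclideanSpace.single i 1)
        = fderiv ℝ w x (EuclideanSpace.single ⟨1, by omega⟩ 1)
            * fderiv ℝ φ x (EuclideanSpace.single ⟨0, by omega⟩ 1)
          - fderiv ℝ w x (EuclideanSpace.single ⟨0, by omega⟩ 1)
            * fderiv ℝ φ x (EuclideanSpace.single ⟨1, by omega⟩ 1) := by
      intro x
      rw [← Finset.sum_subset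
        (Finset.subset_univ ({⟨0, by omega⟩, ⟨1, by omega⟩} : Finset (Fin n)))
        (fun i _ hi => ?_)]
      · rw [Finset.sum_insert (by simpa using h01), Finset.sum_singleton, hu0, hu1]
        ring
      · simp only [Finset.mem_insert, Finset.mem_singleton, not_or] at hi
        rw [hrest x i hi.1 hi.2, zero_mul]
    simp only [hsum]
    rw [integral_sub
      (aux_int hφ hφc (hwc.clm_apply continuous_const) _)
      (aux_int hφ hφc (hwc.clm_apply continuous_const) _), sub_eq_zero]
    exact aux_parts hw1 hφ hφc _ _
end
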